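/- Let T₀ ∈ GL₃(ℂ). For p₁,…,p₄ ∈ ℂ³ let d_i(p₁,…,p₄), i = 1,2,3, be the determinant of the 3×3 matrix with columns p₁, p₂, p₃ in which the i-th column is replaced by p₄, and let P(p₁,…,p₄) be the 3×3 matrix product (p₁ | p₂ | p₃)·diag(d₁(p), d₂(p), d₃(p)). Then P(T₀p₁, T₀p₂, T₀p₃, T₀p₄) = det(T₀)·T₀·P(p₁,…,p₄). -/

import Mathlib

/-!
Applying `T₀` to every point multiplies the column matrix `(p₁ | p₂ | p₃)`, and each of the
column-replaced matrices defining `dᵢ`, on the left by `T₀`. Hence every `dᵢ` scales by `det T₀`,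
and `P = (p₁ | p₂ | p₃) · diag(d)` picks up the factor `det T₀ · T₀`.
-/

open Matrix

/-- `d_i(p₁,…,p₄)`, `i = 1,2,3`: the determinant of the 3×3 matrix with columns
`p₁, p₂, p₃` in which the `i`-th column is replaced by `p₄`. -/
def dT (p : Fin 4 → Fin 3 → ℂ) (i : Fin 3) : ℂ :=
  (Matrix.of fun r c => if c = i then p 3 r else p c.castSucc r).det

/-- `P(p₁,…,p₄) = (p₁ | p₂ | p₃) · diag(d₁(p), d₂(p), d₃(p))`. -/
def PmatT (p : Fin 4 → Fin 3 → ℂ) : Matrix (Fin 3) (Fin 3) ℂ :=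
  Matrix.of fun r c => p c.castSucc r * dT p c

lemma of_mulVec_eq_mul {R l m n : Type*} [NonUnitalNonAssocSemiring R] [Fintype m]
    (T : Matrix l m R) (v : n → m → R) :
    (Matrix.of fun r c => (T *ᵥ v c) r) = T * Matrix.of fun r c => v c r := by
  ext r c
  simp [mul_apply, mulVec, dotProduct]

lemma dT_eq_det_updateCol (p : Fin 4 → Fin 3 → ℂ) (i : Fin 3) :
    dT p i = ((Matrix.of fun r c => p c.castSucc r).updateCol i (p 3)).det := by
  rw [dT]
  congr 1
  ext r c
  simp [updateCol_apply]

lemma dT_mulVec (T₀ : Matrix (Fin 3) (Fin 3) ℂ) (p : Fin 4 → Fin 3 → ℂ) (i : Fin 3) :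
    dT (fun j => T₀ *ᵥ p j) i = T₀.det * dT p i := by
  rw [dT_eq_det_updateCol, dT_eq_det_updateCol, of_mulVec_eq_mul, ← mul_updateCol, det_mul]

lemma PmatT_eq_mul_diagonal (p : Fin 4 → Fin 3 → ℂ) :
    PmatT p = (Matrix.of fun r c => p c.castSucc r) * diagonal (dT p) := by
  ext r c
  simp [PmatT, mul_diagonal]

theorem PmatT_equivariance_general (T₀ : Matrix (Fin 3) (Fin 3) ℂ)
    (p : Fin 4 → Fin 3 → ℂ) :
    PmatT (fun i => T₀.mulVec (p i)) = T₀.det • (T₀ * PmatT p) := by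
  have hd : dT (fun i => T₀ *ᵥ p i) = T₀.det • dT p := funext (dT_mulVec T₀ p)
  rw [PmatT_eq_mul_diagonal, PmatT_eq_mul_diagonal, hd, of_mulVec_eq_mul, diagonal_smul,
    mul_smul_comm, Matrix.mul_assoc]

/-- **Equivariance of the image normalization (eq. 3.12).** For `T₀ ∈ GL₃(ℂ)`,
`P(T₀p₁, T₀p₂, T₀p₃, T₀p₄) = det(T₀)·T₀·P(p₁,…,p₄)`. -/
theorem PmatT_equivariance (T₀ : Matrix (Fin 3) (Fin 3) ℂ) (hT : IsUnit T₀)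
    (p : Fin 4 → Fin 3 → ℂ) :
    PmatT (fun i => T₀.mulVec (p i)) = T₀.det • (T₀ * PmatT p) :=
  PmatT_equivariance_general T₀ p
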